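/- Consider a scheduling game with rank-based utilities on two identical machines with n = 2ℓ unit jobs (ℓ ≥ 1) and arbitrary priority lists π₁, π₂, and let s be a pure Nash equilibrium. Then: (a) each machine is assigned exactly ℓ jobs; (b) writing j_{ik} for the unique job assigned to M_i with completion time k (for i ∈ {1,2} and 1 ≤ k ≤ ℓ), for every 1 ≤ k ≤ ℓ and every job w whose completion time in s is strictly greater than k: if w ≠ j_{2k} then π₁(j_{1k}) < π₁(w), and if w ≠ j_{1k} then π₂(j_{2k}) < π₂(w); (c) π₁(j_{1ℓ}) < π₁(j_{2ℓ}) and π₂(j_{2ℓ}) < π₂(j_{1ℓ}). -/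

import Mathlib

open Finset
open scoped Classical

noncomputable section

variable {J M : Type*} [Fintype J]

/-- Completion time of job `j` in profile `s`: the total processing time of the jobs on
`j`'s machine that do not come after `j` in that machine's priority list, divided by the speed. -/
def Ctime (p : J → ℝ) (r : M → ℝ) (π : M → J → ℕ) (s : J → M) (j : J) : ℝ :=
  (∑ j' ∈ univ.filter (fun j' => s j' = s j ∧ π (s j) j' ≤ π (s j) j), p j') / r (s j)

/-- Rank of job `j` in profile `s`. -/
def rankOf (p : J → ℝ) (r : M → ℝ) (π : M → J → ℕ) (s : J → M) (j : J) : ℝ :=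
  ((univ.filter (fun j' => Ctime p r π s j' < Ctime p r π s j)).card : ℝ) +
    (((univ.filter (fun j' => Ctime p r π s j' = Ctime p r π s j)).card : ℝ) + 1) / 2

/-- The unilateral deviation of job `j` to machine `i` is beneficial. -/
def Beneficial (p : J → ℝ) (r : M → ℝ) (π : M → J → ℕ) (s : J → M) (j : J) (i : M) : Prop :=
  rankOf p r π (Function.update s j i) j < rankOf p r π s j ∨
    (rankOf p r π (Function.update s j i) j = rankOf p r π s j ∧
      Ctime p r π (Function.update s j i) j < Ctime p r π s j)

/-- Pure Nash equilibrium: no job has a beneficial deviation. -/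
def IsNE (p : J → ℝ) (r : M → ℝ) (π : M → J → ℕ) (s : J → M) : Prop :=
  ∀ j i, ¬ Beneficial p r π s j i

/-!
With unit jobs on unit-speed machines, the completion time of a job is its position `t` on its
machine, and the positions on a machine of load `L` are exactly `1, …, L`. Counting the jobs that
finish before and together with it gives `2 · rank − 1 = ∑ᵢ min (2 Lᵢ) (2t − 1)`, so a deviation is
beneficial as soon as it lowers this integer. Moving the last job of a machine carrying two more
jobs than the other one lowers it, so an equilibrium is balanced. If machine `i` prefers a job `w`
of the other machine to its own job `v`, then `w` moving to `i` lands no later than `v`; this lowers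
the rank of `w` if `w` finished strictly after `v`, and also if both were last on balanced machines.
-/

def position (π : M → J → ℕ) (s : J → M) (j : J) : ℕ :=
  #{j' | s j' = s j ∧ π (s j) j' ≤ π (s j) j}

def load (s : J → M) (i : M) : ℕ := #{j | s j = i}

def rankScore [Fintype M] (π : M → J → ℕ) (s : J → M) (j : J) : ℕ :=
  ∑ i, min (2 * load s i) (2 * position π s j - 1)

theorem sum_load [Fintype M] (s : J → M) : ∑ i, load s i = Fintype.card J :=
  (card_eq_sum_card_fiberwise (f := s) (t := univ) (by simp)).symm

theorem two_mul_card_lt_add_card_eq {L t : ℕ} (ht : 1 ≤ t) :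
    2 * #{u ∈ Icc 1 L | u < t} + #{u ∈ Icc 1 L | u = t} = min (2 * L) (2 * t - 1) := by
  have hlt : {u ∈ Icc 1 L | u < t} = Icc 1 (min L (t - 1)) := by
    ext u; simp only [mem_filter, mem_Icc]; omega
  rw [hlt, filter_eq', Nat.card_Icc]
  split_ifs with h <;> simp only [mem_Icc, card_singleton, card_empty] at h ⊢ <;> omega

section UnitJobs

variable {π : M → J → ℕ} {s : J → M}

theorem Ctime_unit (j : J) : Ctime (fun _ => 1) (fun _ => 1) π s j = position π s j := by
  simp [Ctime, position]

theorem one_le_position (j : J) : 1 ≤ position π s j :=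
  card_pos.2 ⟨j, by simp⟩

theorem position_le_load (j : J) : position π s j ≤ load s (s j) :=
  card_le_card fun x hx => by
    simp only [mem_filter, mem_univ, true_and] at hx ⊢
    exact hx.1

theorem position_lt_position {j j' : J} (h : s j = s j') (hlt : π (s j) j < π (s j) j') :
    position π s j < position π s j' := by
  refine card_lt_card ⟨fun x hx => ?_, fun hsub => ?_⟩
  · simp only [mem_filter, mem_univ, true_and] at hx ⊢
    exact ⟨hx.1.trans h, h ▸ hx.2.trans hlt.le⟩
  · have := (mem_filter.1 (hsub (by simp : j' ∈ _))).2.2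
    omega

theorem position_injOn {i : M} (hπ : Function.Injective (π i)) :
    Set.InjOn (position π s) {j | s j = i} := by
  intro a ha b hb hab
  simp only [Set.mem_ofPred_eq] at ha hb
  rcases lt_trichotomy (π i a) (π i b) with hlt | heq | hgt
  · exact absurd hab (position_lt_position (ha.trans hb.symm) (ha ▸ hlt)).ne
  · exact hπ heq
  · exact absurd hab (position_lt_position (hb.trans ha.symm) (hb ▸ hgt)).ne'

theorem image_position {i : M} (hπ : Function.Injective (π i)) :
    image (position π s) {j | s j = i} = Icc 1 (load s i) := by
  refine eq_of_subset_of_card_le (fun t ht => ?_) ?_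
  · obtain ⟨j, hj, rfl⟩ := mem_image.1 ht
    rw [mem_filter] at hj
    exact mem_Icc.2 ⟨one_le_position j, hj.2 ▸ position_le_load j⟩
  · rw [card_image_of_injOn (by simpa using position_injOn hπ), Nat.card_Icc, load]
    omega

theorem exists_position_eq {i : M} (hπ : Function.Injective (π i)) {t : ℕ} (ht : 1 ≤ t)
    (ht' : t ≤ load s i) : ∃ j, s j = i ∧ position π s j = t := by
  have : t ∈ image (position π s) {j | s j = i} := by
    rw [image_position hπ, mem_Icc]
    exact ⟨ht, ht'⟩
  simpa using this

theorem card_filter_position [Fintype M] (hπ : ∀ i, Function.Injective (π i))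
    (P : ℕ → Prop) [DecidablePred P] :
    #{j | P (position π s j)} = ∑ i, #{t ∈ Icc 1 (load s i) | P t} := by
  rw [card_eq_sum_card_fiberwise (f := s) (t := univ) (by simp)]
  refine sum_congr rfl fun i _ => ?_
  rw [← image_position (hπ i), filter_image, card_image_of_injOn, filter_filter, filter_filter]
  · congr 1; exact filter_congr fun _ _ => and_comm
  · exact (position_injOn (hπ i)).mono fun j hj => by simp_all

theorem rankOf_unit [Fintype M] (hπ : ∀ i, Function.Injective (π i)) (j : J) :
    rankOf (fun _ => 1) (fun _ => 1) π s j = (rankScore π s j + 1) / 2 := by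
  simp only [rankOf, Ctime_unit, Nat.cast_lt, Nat.cast_inj]
  rw [card_filter_position hπ (· < position π s j), card_filter_position hπ (· = position π s j)]
  have hscore : 2 * ∑ i, #{u ∈ Icc 1 (load s i) | u < position π s j}
      + ∑ i, #{u ∈ Icc 1 (load s i) | u = position π s j} = rankScore π s j := by
    rw [rankScore, mul_sum, ← sum_add_distrib]
    exact sum_congr rfl fun i _ => two_mul_card_lt_add_card_eq (one_le_position j)
  rw [← hscore]
  push_cast
  ring

theorem load_update_self {j : J} {i : M} (h : s j ≠ i) :
    load (Function.update s j i) i = load s i + 1 := by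
  rw [load, load, ← card_insert_of_notMem (s := {x | s x = i}) (by simpa using h)]
  congr 1
  ext x
  rcases eq_or_ne x j with rfl | hx <;> simp [*]

theorem load_update_of_eq {j : J} {i₀ i : M} (hj : s j = i₀) (h : i₀ ≠ i) :
    load (Function.update s j i) i₀ = load s i₀ - 1 := by
  rw [load, load, ← card_erase_of_mem (s := {x | s x = i₀}) (a := j) (by simpa using hj)]
  congr 1
  ext x
  rcases eq_or_ne x j with rfl | hx <;> simp [*, Ne.symm h]

theorem position_update_le {v w : J} {i : M} (hv : s v = i) (hw : s w ≠ i)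
    (hlt : π i w < π i v) : position π (Function.update s w i) w ≤ position π s v := by
  have hsub : ({x | Function.update s w i x = i ∧ π i x ≤ π i w} : Finset J) ⊆
      insert w (({x | s x = s v ∧ π (s v) x ≤ π (s v) v} : Finset J).erase v) := by
    intro x hx
    rcases eq_or_ne x w with rfl | hxw
    · exact mem_insert_self _ _
    · simp only [mem_filter, mem_univ, true_and, Function.update_of_ne hxw] at hx
      simp only [mem_insert, mem_erase, mem_filter, mem_univ, true_and, hv]
      exact Or.inr ⟨by rintro rfl; omega, hx.1, by omega⟩
  have hv_mem : v ∈ ({x | s x = s v ∧ π (s v) x ≤ π (s v) v} : Finset J) := by simp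
  have hv_pos := one_le_position (π := π) (s := s) v
  rw [position, Function.update_self]
  calc _ ≤ _ := card_le_card hsub
    _ ≤ _ := card_insert_le _ _
    _ = position π s v := by rw [card_erase_of_mem hv_mem]; exact Nat.sub_add_cancel hv_pos

end UnitJobs

theorem rankScore_fin_two {π : Fin 2 → J → ℕ} {s : J → Fin 2} {i i' : Fin 2} (h : i ≠ i')
    (j : J) : rankScore π s j = min (2 * load s i) (2 * position π s j - 1) +
      min (2 * load s i') (2 * position π s j - 1) := by
  rw [rankScore, Fin.sum_univ_two]
  fin_cases i <;> fin_cases i' <;> first | rfl | exact add_comm _ _ | exact absurd rfl h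

namespace IsNE

theorem rankScore_le [Fintype M] {π : M → J → ℕ} {s : J → M}
    (hNE : IsNE (fun _ => 1) (fun _ => 1) π s) (hπ : ∀ i, Function.Injective (π i))
    (j : J) (i : M) : rankScore π s j ≤ rankScore π (Function.update s j i) j := by
  by_contra! h
  refine hNE j i (Or.inl ?_)
  rw [rankOf_unit hπ, rankOf_unit hπ]
  have : (rankScore π (Function.update s j i) j : ℝ) < rankScore π s j := by exact_mod_cast h
  linarith

variable {π : Fin 2 → J → ℕ} {s : J → Fin 2}

theorem load_le_load_add_one (hNE : IsNE (fun _ => 1) (fun _ => 1) π s)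
    (hπ : ∀ i, Function.Injective (π i)) (i i' : Fin 2) : load s i ≤ load s i' + 1 := by
  by_contra! hgt
  have hii : i ≠ i' := by rintro rfl; omega
  obtain ⟨j, hj, hlast⟩ := exists_position_eq (hπ i) (s := s) (by omega : 1 ≤ load s i) le_rfl
  have hj' : s j ≠ i' := hj ▸ hii
  have hdev := hNE.rankScore_le hπ j i'
  have hnew := position_le_load (π := π) (s := Function.update s j i') j
  rw [Function.update_self, load_update_self hj'] at hnew
  rw [rankScore_fin_two hii, rankScore_fin_two hii, load_update_of_eq hj hii,
    load_update_self hj', hlast] at hdev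
  omega

theorem position_le_of_priority_lt (hNE : IsNE (fun _ => 1) (fun _ => 1) π s)
    (hπ : ∀ i, Function.Injective (π i)) {i : Fin 2} {v w : J} (hv : s v = i) (hw : s w ≠ i)
    (hlt : π i w < π i v) : position π s w ≤ position π s v := by
  by_contra! hpos
  have hdev := hNE.rankScore_le hπ w i
  have hnew := position_update_le hv hw hlt
  have hnew_pos := one_le_position (π := π) (s := Function.update s w i) w
  have hw_le := position_le_load (π := π) (s := s) w
  have hv_le := position_le_load (π := π) (s := s) v
  rw [hv] at hv_le
  rw [rankScore_fin_two hw.symm, rankScore_fin_two hw.symm, load_update_of_eq rfl hw,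
    load_update_self hw] at hdev
  omega

theorem priority_lt_of_position_lt (hNE : IsNE (fun _ => 1) (fun _ => 1) π s)
    (hπ : ∀ i, Function.Injective (π i)) {v w : J} (h : position π s v < position π s w) :
    π (s v) v < π (s v) w := by
  by_contra! hle
  have hlt : π (s v) w < π (s v) v := hle.lt_of_ne ((hπ _).ne (by rintro rfl; omega))
  by_cases hw : s w = s v
  · have := position_lt_position hw (hw ▸ hlt)
    omega
  · have := hNE.position_le_of_priority_lt hπ rfl hw hlt
    omega

theorem priority_lt_of_position_eq_load (hNE : IsNE (fun _ => 1) (fun _ => 1) π s)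
    (hπ : ∀ i, Function.Injective (π i)) {v w : J} (hw : s w ≠ s v)
    (hL : load s (s v) = load s (s w)) (hv : position π s v = load s (s v))
    (hw' : position π s w = load s (s w)) : π (s v) v < π (s v) w := by
  by_contra! hle
  have hlt : π (s v) w < π (s v) v := hle.lt_of_ne ((hπ _).ne (by rintro rfl; exact hw rfl))
  have hdev := hNE.rankScore_le hπ w (s v)
  have hnew := position_update_le rfl hw hlt
  have hnew_pos := one_le_position (π := π) (s := Function.update s w (s v)) w
  rw [rankScore_fin_two hw.symm, rankScore_fin_two hw.symm, load_update_of_eq rfl hw,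
    load_update_self hw] at hdev
  omega

end IsNE

theorem NE_structure_general (ℓ : ℕ) (n : ℕ) (hn : n = 2 * ℓ)
    (π : Fin 2 → Fin n → ℕ) (hπ : ∀ i, Function.Injective (π i))
    (s : Fin n → Fin 2)
    (hNE : IsNE (fun _ => (1:ℝ)) (fun _ => (1:ℝ)) π s) :
    (∀ i, (univ.filter (fun j => s j = i)).card = ℓ) ∧
    (∀ k : ℕ, 1 ≤ k → k ≤ ℓ → ∀ j1k j2k : Fin n,
      s j1k = 0 → Ctime (fun _ => (1:ℝ)) (fun _ => (1:ℝ)) π s j1k = (k : ℝ) →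
      s j2k = 1 → Ctime (fun _ => (1:ℝ)) (fun _ => (1:ℝ)) π s j2k = (k : ℝ) →
      ∀ w, (k : ℝ) < Ctime (fun _ => (1:ℝ)) (fun _ => (1:ℝ)) π s w →
        (w ≠ j2k → π 0 j1k < π 0 w) ∧ (w ≠ j1k → π 1 j2k < π 1 w)) ∧
    (∀ j1 j2 : Fin n,
      s j1 = 0 → Ctime (fun _ => (1:ℝ)) (fun _ => (1:ℝ)) π s j1 = (ℓ : ℝ) →
      s j2 = 1 → Ctime (fun _ => (1:ℝ)) (fun _ => (1:ℝ)) π s j2 = (ℓ : ℝ) →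
      π 0 j1 < π 0 j2 ∧ π 1 j2 < π 1 j1) := by
  have hsum : load s 0 + load s 1 = 2 * ℓ := by
    rw [← Fin.sum_univ_two, sum_load, Fintype.card_fin, hn]
  have h01 := hNE.load_le_load_add_one hπ 0 1
  have h10 := hNE.load_le_load_add_one hπ 1 0
  have hload : ∀ i, load s i = ℓ := by
    intro i
    fin_cases i <;> dsimp <;> omega
  refine ⟨fun i => by rw [← hload i, load]; congr, ?_, ?_⟩
  · intro k _ _ j1k j2k hs1 hC1 hs2 hC2 w hw
    simp only [Ctime_unit, Nat.cast_inj, Nat.cast_lt] at hC1 hC2 hw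
    exact ⟨fun _ => hs1 ▸ hNE.priority_lt_of_position_lt hπ (hC1 ▸ hw),
      fun _ => hs2 ▸ hNE.priority_lt_of_position_lt hπ (hC2 ▸ hw)⟩
  · intro j1 j2 hs1 hC1 hs2 hC2
    simp only [Ctime_unit, Nat.cast_inj] at hC1 hC2
    have hne : s j2 ≠ s j1 := by rw [hs1, hs2]; decide
    have hL : load s (s j1) = load s (s j2) := by rw [hload, hload]
    exact ⟨hs1 ▸ hNE.priority_lt_of_position_eq_load hπ hne hL (by rw [hload, hC1])
        (by rw [hload, hC2]),
      hs2 ▸ hNE.priority_lt_of_position_eq_load hπ hne.symm hL.symm (by rw [hload, hC2])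
        (by rw [hload, hC1])⟩

/-- Structure of NE profiles for `2ℓ` unit jobs on two identical machines. -/
theorem NE_structure (ℓ : ℕ) (hℓ : 1 ≤ ℓ) (n : ℕ) (hn : n = 2 * ℓ)
    (π : Fin 2 → Fin n → ℕ) (hπ : ∀ i, Function.Injective (π i))
    (s : Fin n → Fin 2)
    (hNE : IsNE (fun _ => (1:ℝ)) (fun _ => (1:ℝ)) π s) :
    (∀ i, (univ.filter (fun j => s j = i)).card = ℓ) ∧
    (∀ k : ℕ, 1 ≤ k → k ≤ ℓ → ∀ j1k j2k : Fin n,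
      s j1k = 0 → Ctime (fun _ => (1:ℝ)) (fun _ => (1:ℝ)) π s j1k = (k : ℝ) →
      s j2k = 1 → Ctime (fun _ => (1:ℝ)) (fun _ => (1:ℝ)) π s j2k = (k : ℝ) →
      ∀ w, (k : ℝ) < Ctime (fun _ => (1:ℝ)) (fun _ => (1:ℝ)) π s w →
        (w ≠ j2k → π 0 j1k < π 0 w) ∧ (w ≠ j1k → π 1 j2k < π 1 w)) ∧
    (∀ j1 j2 : Fin n,
      s j1 = 0 → Ctime (fun _ => (1:ℝ)) (fun _ => (1:ℝ)) π s j1 = (ℓ : ℝ) →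
      s j2 = 1 → Ctime (fun _ => (1:ℝ)) (fun _ => (1:ℝ)) π s j2 = (ℓ : ℝ) →
      π 0 j1 < π 0 j2 ∧ π 1 j2 < π 1 j1) :=
  NE_structure_general ℓ n hn π hπ s hNE
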